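/- For finitely supported real sequences b = {b_I}, β = {β_J}, independent uniform ±1 random signs σ = {σ_J}, and any φ ∈ L²(ℝ), E ‖P^{0,1}_b (P^{σ,0,1}_β φ)‖_2² = Σ_{J∈𝒟} ⟨φ, h¹_J⟩² · (β_J²/|J|) · Σ_{I∈𝒟, I⊊J} b_I² |I|. -/

import Mathlib

open MeasureTheory ProbabilityTheory Real Filter
open scoped ENNReal

attribute [local instance] Classical.propDecidable

noncomputable section

namespace RandomParaproducts

/-- Dyadic intervals: `(n, k)` represents `[k·2ⁿ, (k+1)·2ⁿ)`. -/
abbrev D : Type := ℤ × ℤ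

/-- The length `2ⁿ` of the dyadic interval `(n, k)`. -/
def len (I : D) : ℝ := (2 : ℝ) ^ I.1

/-- The dyadic interval `[k·2ⁿ, (k+1)·2ⁿ)` as a subset of `ℝ`. -/
def ival (I : D) : Set ℝ := Set.Ico ((I.2 : ℝ) * (2 : ℝ) ^ I.1) (((I.2 : ℝ) + 1) * (2 : ℝ) ^ I.1)

/-- The left half of a dyadic interval. -/
def lc (I : D) : D := (I.1 - 1, 2 * I.2)

/-- The right half of a dyadic interval. -/
def rc (I : D) : D := (I.1 - 1, 2 * I.2 + 1)

/-- The `L²`-normalized Haar function `h_I = h⁰_I`. -/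
def haar (I : D) : ℝ → ℝ := fun x =>
  (Real.sqrt (len I))⁻¹ *
    ((ival (rc I)).indicator (fun _ => (1 : ℝ)) x - (ival (lc I)).indicator (fun _ => (1 : ℝ)) x)

/-- The function `h¹_I = |h_I| = |I|^{-1/2} 1_I`. -/
def haar1 (I : D) : ℝ → ℝ := fun x =>
  (Real.sqrt (len I))⁻¹ * (ival I).indicator (fun _ => (1 : ℝ)) x

/-- `h^ε_I`, where `false` codes the exponent `0` and `true` codes the exponent `1`. -/
def hfun : Bool → D → ℝ → ℝ
  | false => haar
  | true => haar1

/-- The inner product `⟨f, g⟩ = ∫ f g` on `L²(ℝ)`. -/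
def ip (f g : ℝ → ℝ) : ℝ := ∫ x, f x * g x

/-- The paraproduct `P^{ε,δ}_b f = ∑_I b_I ⟨f, h^δ_I⟩ h^ε_I` with finitely supported
numerical symbol `b`. -/
def P (e d : Bool) (b : D →₀ ℝ) (f : ℝ → ℝ) : ℝ → ℝ := fun x =>
  ∑ I ∈ b.support, b I * ip f (hfun d I) * hfun e I x

/-- The signed paraproduct `P^{σ,ε,δ}_b f = ∑_I σ_I b_I ⟨f, h^δ_I⟩ h^ε_I`. -/
def Psig (σ : D → ℝ) (e d : Bool) (b : D →₀ ℝ) (f : ℝ → ℝ) : ℝ → ℝ := fun x =>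
  ∑ I ∈ b.support, σ I * (b I * ip f (hfun d I) * hfun e I x)

/-- The square of the `L²(ℝ)` norm, `‖g‖₂² = ∫ g²`. -/
def l2normSq (g : ℝ → ℝ) : ℝ := ∫ x, (g x) ^ 2

/-- The Carleson norm of a sequence `a` whose nonzero entries lie in the finite set `s`:
`sup_J (|J|⁻¹ ∑_{I ⊆ J} a_I² |I|)^{1/2}`. -/
def carlOn (s : Finset D) (a : D → ℝ) : ℝ :=
  ⨆ J : D, Real.sqrt ((len J)⁻¹ *
    ∑ I ∈ s.filter (fun I => ival I ⊆ ival J), (a I) ^ 2 * len I)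

/-- `μ` is the law of independent uniformly distributed random signs `{σ_I : I ∈ 𝒟}`. -/
def IsSignMeasure (μ : Measure (D → ℝ)) : Prop :=
  IsProbabilityMeasure μ ∧
    iIndepFun (m := fun _ : D => (inferInstance : MeasurableSpace ℝ)) (fun I σ => σ I) μ ∧
    ∀ I : D, μ.map (fun σ => σ I) =
      (2⁻¹ : ℝ≥0∞) • (Measure.dirac (1 : ℝ) + Measure.dirac (-1 : ℝ))

/-- `f` is a unit vector of `L²(ℝ)`. -/
def UnitL2 (f : ℝ → ℝ) : Prop := MemLp f 2 volume ∧ eLpNorm f 2 volume = 1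

/-- The operator norm on `L²(ℝ)` of a map defined on functions. -/
def opNorm (T : (ℝ → ℝ) → ℝ → ℝ) : ℝ :=
  ⨆ f : {f : ℝ → ℝ // UnitL2 f}, Real.sqrt (l2normSq (T f.1))

/-- The averaged operator norm `sup_{‖f‖₂ = 1} (𝔼 ‖T_σ f‖₂²)^{1/2}`. -/
def avgOpNorm (μ : Measure (D → ℝ)) (T : (D → ℝ) → (ℝ → ℝ) → ℝ → ℝ) : ℝ :=
  ⨆ f : {f : ℝ → ℝ // UnitL2 f}, Real.sqrt (∫ σ, l2normSq (T σ f.1) ∂μ)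

/-- `b` is the finite linear combination of Haar functions with coefficients `c`. -/
def FinHaar (b : ℝ → ℝ) (c : D →₀ ℝ) : Prop :=
  b = fun x => ∑ I ∈ c.support, c I * haar I x

/-- The paraproduct `P^{ε,γ}_{b,α} f = ∑_{I} (⟨b, h^α_I⟩/|I|^{1/2}) ⟨f, h^γ_I⟩ h^ε_I` with
function symbol `b`, the sum extended over a finite set `s` containing all the
nonvanishing terms. -/
def Pb (s : Finset D) (e g a : Bool) (b : ℝ → ℝ) (f : ℝ → ℝ) : ℝ → ℝ := fun x =>
  ∑ I ∈ s, (ip b (hfun a I) / Real.sqrt (len I)) * ip f (hfun g I) * hfun e I x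

lemma measurableSet_ival (I : D) : MeasurableSet (ival I) := measurableSet_Ico

lemma volume_ival_ne_top (I : D) : volume (ival I) ≠ ⊤ := by
  simp only [ival, Real.volume_Ico]; exact ENNReal.ofReal_ne_top

lemma memℒp_haar (I : D) : MemLp (haar I) 2 volume := by
  have h1 : MemLp ((ival (rc I)).indicator (fun _ => (1 : ℝ))) 2 volume :=
    memLp_indicator_const 2 (measurableSet_ival _) 1 (Or.inr (volume_ival_ne_top _))
  have h2 : MemLp ((ival (lc I)).indicator (fun _ => (1 : ℝ))) 2 volume :=
    memLp_indicator_const 2 (measurableSet_ival _) 1 (Or.inr (volume_ival_ne_top _))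
  exact ((h1.sub h2).const_mul ((Real.sqrt (len I))⁻¹))

/-- The Haar function `h_I` as an element of `L²(ℝ)`. -/
def haarLp (I : D) : Lp ℝ 2 (volume : Measure ℝ) := (memℒp_haar I).toLp (haar I)

/-- The random Haar multiplier `T_σ f = ∑_{I ∈ 𝒟} σ_I ⟨f, h_I⟩ h_I`, as an element of
`L²(ℝ)`; the (infinite) sum converges unconditionally in `L²`. -/
def Tfull (σ : D → ℝ) (g : ℝ → ℝ) : Lp ℝ 2 (volume : Measure ℝ) :=
  ∑' I : D, (σ I * ip g (haar I)) • haarLp I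

/-- The composition `M_b T_σ M_β` applied to `f`, as a function. -/
def MbTM (σ : D → ℝ) (b β f : ℝ → ℝ) : ℝ → ℝ := fun x =>
  b x * (Tfull σ fun y => β y * f y) x

/-!
Both paraproducts are finite Haar expansions, `P^{σ,0,1}_β φ = ∑_J σ_J β_J ⟨φ, h¹_J⟩ h_J` and
`P^{0,1}_b g = ∑_I b_I ⟨g, h¹_I⟩ h_I`. Orthonormality of the Haar system gives
`‖P^{0,1}_b P^{σ,0,1}_β φ‖₂² = ∑_I b_I² (∑_J σ_J β_J ⟨φ, h¹_J⟩ ⟨h_J, h¹_I⟩)²`, and since the signs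
are orthonormal in `L²(μ)` the expectation is `∑_I ∑_J b_I² β_J² ⟨φ, h¹_J⟩² ⟨h_J, h¹_I⟩²`.
Finally `h_J` equals `±|J|^{-1/2}` on every dyadic `I ⊊ J` and has integral zero over every set
containing `J`, so `⟨h_J, h¹_I⟩² = |I|/|J|` if `I ⊊ J` and `0` otherwise.
-/

lemma len_pos (I : D) : 0 < len I := zpow_pos two_pos _

lemma mem_ival_iff {x : ℝ} {I : D} : x ∈ ival I ↔ ⌊x / len I⌋ = I.2 := by
  rw [Int.floor_eq_iff, le_div_iff₀ (len_pos I), div_lt_iff₀ (len_pos I)]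
  rfl

lemma floor_div_len_of_level_eq_add (x : ℝ) {I J : D} {m : ℕ} (h : J.1 = I.1 + m) :
    ⌊x / len J⌋ = ⌊x / len I⌋ / 2 ^ m := by
  have hJ : len J = len I * (2 ^ m : ℕ) := by
    simp [len, h, zpow_add₀ (two_ne_zero (α := ℝ))]
  rw [hJ, ← div_div, Int.floor_div_natCast]
  simp

lemma ival_subset_or_disjoint {I J : D} (h : I.1 ≤ J.1) :
    ival I ⊆ ival J ∨ Disjoint (ival I) (ival J) := by
  obtain ⟨m, hm⟩ : ∃ m : ℕ, J.1 = I.1 + m := ⟨(J.1 - I.1).toNat, by omega⟩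
  by_cases hk : I.2 / 2 ^ m = J.2
  · left
    intro x hx
    rw [mem_ival_iff] at hx ⊢
    rw [floor_div_len_of_level_eq_add x hm, hx, hk]
  · right
    refine Set.disjoint_left.2 fun x hxI hxJ => hk ?_
    rw [mem_ival_iff] at hxI hxJ
    rw [← hxI, ← hxJ, floor_div_len_of_level_eq_add x hm]

lemma mem_ival_iff_mem_lc_or_mem_rc {x : ℝ} {I : D} :
    x ∈ ival I ↔ x ∈ ival (lc I) ∨ x ∈ ival (rc I) := by
  have h := floor_div_len_of_level_eq_add x (I := lc I) (J := I) (m := 1) (by simp [lc])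
  rw [mem_ival_iff, mem_ival_iff, mem_ival_iff, h]
  change _ ↔ ⌊x / len (lc I)⌋ = 2 * I.2 ∨ ⌊x / len (lc I)⌋ = 2 * I.2 + 1
  omega

lemma ival_lc_union_ival_rc (I : D) : ival (lc I) ∪ ival (rc I) = ival I := by
  ext x; exact mem_ival_iff_mem_lc_or_mem_rc.symm

lemma disjoint_ival_lc_ival_rc (I : D) : Disjoint (ival (lc I)) (ival (rc I)) := by
  refine Set.disjoint_left.2 fun x hl hr => ?_
  rw [mem_ival_iff] at hl hr
  change ⌊x / len (lc I)⌋ = _ at hr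
  simp only [lc, rc] at hl hr
  omega

lemma ival_nonempty (I : D) : (ival I).Nonempty :=
  ⟨I.2 * len I, by rw [mem_ival_iff, mul_div_cancel_right₀ _ (len_pos I).ne', Int.floor_intCast]⟩

lemma eq_of_mem_ival_of_level_eq {I J : D} {x : ℝ} (h : I.1 = J.1) (hI : x ∈ ival I)
    (hJ : x ∈ ival J) : I = J := by
  rw [mem_ival_iff] at hI hJ
  have hlen : len I = len J := by rw [len, len, h]
  exact Prod.ext h (by rw [← hI, ← hJ, hlen])

lemma volume_real_ival (I : D) : volume.real (ival I) = len I := by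
  have hI := len_pos I
  unfold len at hI
  rw [ival, Real.volume_real_Ico_of_le (by nlinarith)]
  unfold len
  ring

lemma level_le_of_ival_subset {I J : D} (h : ival I ⊆ ival J) : I.1 ≤ J.1 := by
  have hlen : len I ≤ len J := by
    rw [← volume_real_ival, ← volume_real_ival]
    exact measureReal_mono h (volume_ival_ne_top J)
  exact (zpow_le_zpow_iff_right₀ one_lt_two).1 hlen

lemma ival_injective : Function.Injective ival := fun I J h => by
  obtain ⟨x, hx⟩ := ival_nonempty I
  refine eq_of_mem_ival_of_level_eq ?_ hx (h ▸ hx)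
  exact le_antisymm (level_le_of_ival_subset h.le) (level_le_of_ival_subset h.ge)

lemma level_lt_of_ival_ssubset {I J : D} (h : ival I ⊂ ival J) : I.1 < J.1 := by
  refine (level_le_of_ival_subset h.subset).lt_of_ne fun hIJ => h.ne ?_
  obtain ⟨x, hx⟩ := ival_nonempty I
  rw [eq_of_mem_ival_of_level_eq hIJ hx (h.subset hx)]

lemma ival_ssubset_or_superset_or_disjoint (I J : D) :
    ival I ⊂ ival J ∨ ival J ⊆ ival I ∨ Disjoint (ival I) (ival J) := by
  rcases le_total I.1 J.1 with h | h
  · rcases ival_subset_or_disjoint h with hIJ | hIJ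
    · rcases eq_or_ne (ival I) (ival J) with he | hne
      · exact Or.inr (Or.inl he.ge)
      · exact Or.inl (ssubset_of_subset_of_ne hIJ hne)
    · exact Or.inr (Or.inr hIJ)
  · rcases ival_subset_or_disjoint h with hJI | hJI
    · exact Or.inr (Or.inl hJI)
    · exact Or.inr (Or.inr hJI.symm)

lemma ival_subset_lc_or_rc_of_ssubset {I J : D} (h : ival I ⊂ ival J) :
    ival I ⊆ ival (lc J) ∨ ival I ⊆ ival (rc J) := by
  have hlevel : I.1 ≤ J.1 - 1 := by linarith [level_lt_of_ival_ssubset h]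
  rcases ival_subset_or_disjoint (J := lc J) hlevel with hl | hl
  · exact Or.inl hl
  rcases ival_subset_or_disjoint (J := rc J) hlevel with hr | hr
  · exact Or.inr hr
  obtain ⟨x, hx⟩ := ival_nonempty I
  rcases mem_ival_iff_mem_lc_or_mem_rc.1 (h.subset hx) with hxl | hxr
  · exact absurd hxl (Set.disjoint_left.1 hl hx)
  · exact absurd hxr (Set.disjoint_left.1 hr hx)

lemma ival_lc_subset (I : D) : ival (lc I) ⊆ ival I :=
  ival_lc_union_ival_rc I ▸ Set.subset_union_left

lemma ival_rc_subset (I : D) : ival (rc I) ⊆ ival I :=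
  ival_lc_union_ival_rc I ▸ Set.subset_union_right

lemma volume_real_ival_lc (I : D) : volume.real (ival (lc I)) = len I / 2 := by
  rw [volume_real_ival, lc, len, len, zpow_sub_one₀ two_ne_zero, div_eq_mul_inv]

lemma volume_real_ival_rc (I : D) : volume.real (ival (rc I)) = len I / 2 :=
  (volume_real_ival (rc I)).trans ((volume_real_ival (lc I)).symm.trans (volume_real_ival_lc I))

lemma integrable_indicator_ival (I : D) : Integrable ((ival I).indicator fun _ => (1 : ℝ)) :=
  (integrable_indicator_iff (measurableSet_ival I)).2 (integrableOn_const (volume_ival_ne_top I))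

lemma integrable_haar (I : D) : Integrable (haar I) :=
  ((integrable_indicator_ival (rc I)).sub (integrable_indicator_ival (lc I))).const_mul _

lemma memLp_haar1 (I : D) : MemLp (haar1 I) 2 volume :=
  (memLp_indicator_const 2 (measurableSet_ival I) 1 (Or.inr (volume_ival_ne_top I))).const_mul _

lemma setIntegral_haar (J : D) (S : Set ℝ) :
    ∫ x in S, haar J x =
      (√(len J))⁻¹ * (volume.real (S ∩ ival (rc J)) - volume.real (S ∩ ival (lc J))) := by
  simp only [haar]
  rw [integral_const_mul, integral_sub (integrable_indicator_ival _).integrableOn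
    (integrable_indicator_ival _).integrableOn, setIntegral_indicator (measurableSet_ival _),
    setIntegral_indicator (measurableSet_ival _), setIntegral_const, setIntegral_const,
    smul_eq_mul, smul_eq_mul, mul_one, mul_one]

lemma setIntegral_haar_of_subset_rc {J : D} {S : Set ℝ} (h : S ⊆ ival (rc J)) :
    ∫ x in S, haar J x = (√(len J))⁻¹ * volume.real S := by
  rw [setIntegral_haar, Set.inter_eq_left.2 h,
    ((disjoint_ival_lc_ival_rc J).symm.mono_left h).inter_eq, measureReal_empty, sub_zero]

lemma setIntegral_haar_of_subset_lc {J : D} {S : Set ℝ} (h : S ⊆ ival (lc J)) :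
    ∫ x in S, haar J x = -((√(len J))⁻¹ * volume.real S) := by
  rw [setIntegral_haar, Set.inter_eq_left.2 h,
    ((disjoint_ival_lc_ival_rc J).mono_left h).inter_eq, measureReal_empty, zero_sub, mul_neg]

lemma setIntegral_haar_of_disjoint {J : D} {S : Set ℝ} (h : Disjoint S (ival J)) :
    ∫ x in S, haar J x = 0 := by
  rw [setIntegral_haar, (h.mono_right (ival_rc_subset J)).inter_eq,
    (h.mono_right (ival_lc_subset J)).inter_eq, sub_self, mul_zero]

lemma setIntegral_haar_of_superset {J : D} {S : Set ℝ} (h : ival J ⊆ S) :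
    ∫ x in S, haar J x = 0 := by
  rw [setIntegral_haar, Set.inter_eq_right.2 ((ival_rc_subset J).trans h),
    Set.inter_eq_right.2 ((ival_lc_subset J).trans h), volume_real_ival_rc,
    volume_real_ival_lc, sub_self, mul_zero]

lemma ip_comm (f g : ℝ → ℝ) : ip f g = ip g f := by
  simp only [ip, mul_comm]

lemma mul_indicator_one_apply (g : ℝ → ℝ) (S : Set ℝ) (x : ℝ) :
    g x * S.indicator (fun _ => (1 : ℝ)) x = S.indicator g x := by
  rw [← Set.indicator_mul_right]
  simp only [mul_one]

lemma ip_haar1 (f : ℝ → ℝ) (I : D) : ip f (haar1 I) = (√(len I))⁻¹ * ∫ x in ival I, f x := by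
  simp only [ip, haar1, mul_left_comm (f _), mul_indicator_one_apply]
  rw [integral_const_mul, integral_indicator (measurableSet_ival I)]

lemma ip_haar {g : ℝ → ℝ} (hg : Integrable g) (I : D) :
    ip g (haar I) = (√(len I))⁻¹ * ((∫ x in ival (rc I), g x) - ∫ x in ival (lc I), g x) := by
  simp only [ip, haar, mul_left_comm (g _), mul_sub, mul_indicator_one_apply]
  rw [integral_sub ((hg.indicator (measurableSet_ival _)).const_mul _)
    ((hg.indicator (measurableSet_ival _)).const_mul _), integral_const_mul, integral_const_mul,
    integral_indicator (measurableSet_ival _), integral_indicator (measurableSet_ival _)]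

lemma sqrt_len_inv_mul_self (I : D) : (√(len I))⁻¹ * (√(len I))⁻¹ * len I = 1 := by
  rw [← mul_inv, Real.mul_self_sqrt (len_pos I).le, inv_mul_cancel₀ (len_pos I).ne']

lemma ip_haar_self (I : D) : ip (haar I) (haar I) = 1 := by
  rw [ip_haar (integrable_haar I), setIntegral_haar_of_subset_rc subset_rfl,
    setIntegral_haar_of_subset_lc subset_rfl, volume_real_ival_rc, volume_real_ival_lc]
  linear_combination sqrt_len_inv_mul_self I

lemma ip_haar_haar_of_ssubset {I J : D} (h : ival I ⊂ ival J) : ip (haar J) (haar I) = 0 := by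
  rw [ip_haar (integrable_haar J)]
  rcases ival_subset_lc_or_rc_of_ssubset h with hc | hc
  · rw [setIntegral_haar_of_subset_lc ((ival_rc_subset I).trans hc),
      setIntegral_haar_of_subset_lc ((ival_lc_subset I).trans hc), volume_real_ival_rc,
      volume_real_ival_lc, sub_self, mul_zero]
  · rw [setIntegral_haar_of_subset_rc ((ival_rc_subset I).trans hc),
      setIntegral_haar_of_subset_rc ((ival_lc_subset I).trans hc), volume_real_ival_rc,
      volume_real_ival_lc, sub_self, mul_zero]

lemma ip_haar_haar_of_ne {I J : D} (h : I ≠ J) : ip (haar I) (haar J) = 0 := by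
  rcases ival_ssubset_or_superset_or_disjoint I J with hIJ | hJI | hIJ
  · rw [ip_comm]
    exact ip_haar_haar_of_ssubset hIJ
  · exact ip_haar_haar_of_ssubset (hJI.ssubset_of_ne fun he => h (ival_injective he).symm)
  · rw [ip_haar (integrable_haar I), setIntegral_haar_of_disjoint
      (hIJ.symm.mono_left (ival_rc_subset J)), setIntegral_haar_of_disjoint
      (hIJ.symm.mono_left (ival_lc_subset J)), sub_self, mul_zero]

lemma sq_ip_haar_haar1 (I J : D) :
    ip (haar J) (haar1 I) ^ 2 = if ival I ⊂ ival J then len I / len J else 0 := by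
  rw [ip_haar1]
  split_ifs with h
  · have hsq : ((√(len I))⁻¹ * ((√(len J))⁻¹ * len I)) ^ 2 = len I / len J := by
      rw [mul_pow, mul_pow, inv_pow, inv_pow, Real.sq_sqrt (len_pos I).le,
        Real.sq_sqrt (len_pos J).le]
      field_simp [(len_pos I).ne']
    rcases ival_subset_lc_or_rc_of_ssubset h with hc | hc
    · rw [setIntegral_haar_of_subset_lc hc, volume_real_ival, mul_neg, neg_sq, hsq]
    · rw [setIntegral_haar_of_subset_rc hc, volume_real_ival, hsq]
  · rcases ival_ssubset_or_superset_or_disjoint I J with hIJ | hJI | hIJ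
    · exact absurd hIJ h
    · rw [setIntegral_haar_of_superset hJI, mul_zero, zero_pow two_ne_zero]
    · rw [setIntegral_haar_of_disjoint hIJ, mul_zero, zero_pow two_ne_zero]

lemma sq_finset_sum_mul {Ω ι : Type*} (X : ι → Ω → ℝ) (s : Finset ι) (a : ι → ℝ) (ω : Ω) :
    (∑ i ∈ s, a i * X i ω) ^ 2 = ∑ i ∈ s, ∑ j ∈ s, a i * a j * (X i ω * X j ω) := by
  rw [sq, Finset.sum_mul_sum]
  exact Finset.sum_congr rfl fun i _ => Finset.sum_congr rfl fun j _ => by ring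

section Orthonormal

variable {Ω ι : Type*} [MeasurableSpace Ω] {ν : Measure Ω} {X : ι → Ω → ℝ}

lemma integrable_sq_finset_sum (hX : ∀ i j, Integrable (fun ω => X i ω * X j ω) ν)
    (s : Finset ι) (a : ι → ℝ) : Integrable (fun ω => (∑ i ∈ s, a i * X i ω) ^ 2) ν := by
  simp_rw [sq_finset_sum_mul]
  exact integrable_finsetSum _ fun i _ => integrable_finsetSum _ fun j _ => (hX i j).const_mul _

lemma integral_sq_finset_sum (hX : ∀ i j, Integrable (fun ω => X i ω * X j ω) ν)
    (hself : ∀ i, ∫ ω, X i ω * X i ω ∂ν = 1) (hne : ∀ i j, i ≠ j → ∫ ω, X i ω * X j ω ∂ν = 0)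
    (s : Finset ι) (a : ι → ℝ) : ∫ ω, (∑ i ∈ s, a i * X i ω) ^ 2 ∂ν = ∑ i ∈ s, a i ^ 2 := by
  simp_rw [sq_finset_sum_mul]
  rw [integral_finsetSum _ fun i _ => integrable_finsetSum _ fun j _ => (hX i j).const_mul _]
  refine Finset.sum_congr rfl fun i hi => ?_
  rw [integral_finsetSum _ fun j _ => (hX i j).const_mul _, Finset.sum_eq_single_of_mem i hi
    fun j _ hji => by rw [integral_const_mul, hne i j hji.symm, mul_zero],
    integral_const_mul, hself, mul_one, sq]

end Orthonormal

namespace IsSignMeasure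

variable {μ : Measure (D → ℝ)}

lemma ae_eq_one_or_eq_neg_one (hμ : IsSignMeasure μ) (J : D) :
    ∀ᵐ σ ∂μ, σ J = 1 ∨ σ J = -1 := by
  have hS : MeasurableSet {y : ℝ | y = 1 ∨ y = -1} :=
    (measurableSet_singleton 1).union (measurableSet_singleton (-1))
  have hJ : Measurable fun σ : D → ℝ => σ J := measurable_pi_apply J
  refine (ae_map_iff hJ.aemeasurable hS).1 ?_
  rw [hμ.2.2 J, Measure.ae_ennreal_smul_measure_iff (by norm_num), ae_add_measure_iff,
    ae_dirac_iff hS, ae_dirac_iff hS]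
  norm_num

lemma integrable_mul (hμ : IsSignMeasure μ) (J K : D) : Integrable (fun σ => σ J * σ K) μ := by
  have := hμ.1
  refine Integrable.mono' (integrable_const 1)
    ((measurable_pi_apply J).mul (measurable_pi_apply K)).aestronglyMeasurable ?_
  filter_upwards [hμ.ae_eq_one_or_eq_neg_one J, hμ.ae_eq_one_or_eq_neg_one K] with σ hJ hK
  rcases hJ with hJ | hJ <;> rcases hK with hK | hK <;> simp [hJ, hK]

lemma integral_mul_self (hμ : IsSignMeasure μ) (J : D) : ∫ σ, σ J * σ J ∂μ = 1 := by
  have := hμ.1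
  rw [integral_congr_ae (g := fun _ => (1 : ℝ)), integral_const, probReal_univ, one_smul]
  filter_upwards [hμ.ae_eq_one_or_eq_neg_one J] with σ hJ
  rcases hJ with hJ | hJ <;> simp [hJ]

lemma integral_eval (hμ : IsSignMeasure μ) (J : D) : ∫ σ, σ J ∂μ = 0 := by
  have hJ : Measurable fun σ : D → ℝ => σ J := measurable_pi_apply J
  rw [← integral_map (f := fun y => y) hJ.aemeasurable aestronglyMeasurable_id, hμ.2.2 J,
    integral_smul_measure, integral_add_measure (integrable_dirac (by simp))
      (integrable_dirac (by simp)), integral_dirac, integral_dirac]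
  norm_num

lemma integral_mul_of_ne (hμ : IsSignMeasure μ) {J K : D} (h : J ≠ K) :
    ∫ σ, σ J * σ K ∂μ = 0 := by
  have hindep := (hμ.2.1.indepFun h).integral_mul_eq_mul_integral
    (measurable_pi_apply J).aestronglyMeasurable (measurable_pi_apply K).aestronglyMeasurable
  simp only [Pi.mul_apply] at hindep
  rw [hindep, hμ.integral_eval, zero_mul]

end IsSignMeasure

lemma integrable_haar_mul {g : ℝ → ℝ} (hg : MemLp g 2 volume) (I : D) :
    Integrable (fun x => haar I x * g x) :=
  (memℒp_haar I).integrable_mul hg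

def haarSum (s : Finset D) (c : D → ℝ) : ℝ → ℝ := fun x => ∑ I ∈ s, c I * haar I x

lemma l2normSq_haarSum (s : Finset D) (c : D → ℝ) :
    l2normSq (haarSum s c) = ∑ I ∈ s, c I ^ 2 :=
  integral_sq_finset_sum (fun I J => integrable_haar_mul (memℒp_haar J) I) ip_haar_self
    (fun _ _ => ip_haar_haar_of_ne) s c

lemma ip_haarSum_haar1 (s : Finset D) (c : D → ℝ) (I : D) :
    ip (haarSum s c) (haar1 I) = ∑ J ∈ s, c J * ip (haar J) (haar1 I) := by
  simp only [ip, haarSum, Finset.sum_mul, mul_assoc]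
  rw [integral_finsetSum _ fun J _ => (integrable_haar_mul (memLp_haar1 I) J).const_mul (c J)]
  simp only [integral_const_mul]

lemma P_eq_haarSum (b : D →₀ ℝ) (f : ℝ → ℝ) :
    P false true b f = haarSum b.support fun I => b I * ip f (haar1 I) :=
  rfl

lemma Psig_eq_haarSum (σ : D → ℝ) (β : D →₀ ℝ) (f : ℝ → ℝ) :
    Psig σ false true β f = haarSum β.support fun J => σ J * (β J * ip f (haar1 J)) := by
  funext x
  exact Finset.sum_congr rfl fun J _ => by simp only [hfun]; ring

theorem statement10_general (b β : D →₀ ℝ) (μ : Measure (D → ℝ)) (hμ : IsSignMeasure μ)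
    (φ : ℝ → ℝ) :
    ∫ σ, l2normSq (P false true b (Psig σ false true β φ)) ∂μ =
      ∑ J ∈ β.support, (ip φ (haar1 J)) ^ 2 * ((β J) ^ 2 / len J) *
        ∑ I ∈ b.support.filter (fun I => ival I ⊂ ival J), (b I) ^ 2 * len I := by
  set a : D → D → ℝ := fun I J => β J * ip φ (haar1 J) * ip (haar J) (haar1 I)
  have hnorm (σ : D → ℝ) : l2normSq (P false true b (Psig σ false true β φ)) =
      ∑ I ∈ b.support, b I ^ 2 * (∑ J ∈ β.support, a I J * σ J) ^ 2 := by
    rw [P_eq_haarSum, l2normSq_haarSum]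
    refine Finset.sum_congr rfl fun I _ => ?_
    rw [Psig_eq_haarSum, ip_haarSum_haar1, mul_pow]
    congr 2
    exact Finset.sum_congr rfl fun J _ => by ring
  calc ∫ σ, l2normSq (P false true b (Psig σ false true β φ)) ∂μ
      = ∑ I ∈ b.support, b I ^ 2 * ∫ σ, (∑ J ∈ β.support, a I J * σ J) ^ 2 ∂μ := by
        simp_rw [hnorm]
        rw [integral_finsetSum _ fun I _ =>
          (integrable_sq_finset_sum hμ.integrable_mul _ _).const_mul _]
        simp_rw [integral_const_mul]
    _ = ∑ J ∈ β.support, ∑ I ∈ b.support, b I ^ 2 * a I J ^ 2 := by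
        simp_rw [integral_sq_finset_sum hμ.integrable_mul hμ.integral_mul_self
          (fun _ _ => hμ.integral_mul_of_ne), Finset.mul_sum]
        exact Finset.sum_comm
    _ = _ := by
        refine Finset.sum_congr rfl fun J _ => ?_
        rw [Finset.mul_sum, Finset.sum_filter]
        refine Finset.sum_congr rfl fun I _ => ?_
        rw [mul_pow, mul_pow, sq_ip_haar_haar1]
        split_ifs
        · field_simp [(len_pos J).ne']
        · simp

/-- `𝔼 ‖P^{0,1}_b (P^{σ,0,1}_β φ)‖₂²
= ∑_J ⟨φ, h¹_J⟩² (β_J²/|J|) ∑_{I ⊊ J} b_I² |I|`. -/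
theorem statement10 (b β : D →₀ ℝ) (μ : Measure (D → ℝ)) (hμ : IsSignMeasure μ)
    (φ : ℝ → ℝ) (hφ : MemLp φ 2 volume) :
    ∫ σ, l2normSq (P false true b (Psig σ false true β φ)) ∂μ =
      ∑ J ∈ β.support, (ip φ (haar1 J)) ^ 2 * ((β J) ^ 2 / len J) *
        ∑ I ∈ b.support.filter (fun I => ival I ⊂ ival J), (b I) ^ 2 * len I :=
  statement10_general b β μ hμ φ

end RandomParaproducts
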